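/- Let $\phi_1,\dots,\phi_{d_n} \in L^2(\Omega)$ be a pairwise orthogonal family of nonzero functions with nonnegative values. Then the Bubnov–Galerkin projection $\Pi_n$ on $L^2(\Omega)^d$ determined by the orthogonality conditions $(\pi_n u - u, \phi_i) = 0$, $1 \le i \le d_n$, is $L^2(\Omega)^d_+$-positive, i.e. $\Pi_n(L^2(\Omega)^d_+) \subseteq L^2(\Omega)^d_+$. -/

import Mathlib

/-!
Write `p k = ∑ i, a k i • φ i`. Orthogonality of the `φ i` turns the Galerkin conditions into
`a k i * ‖φ i‖² = ⟪φ i, u k⟫`, so the coefficient vector `c i = (a k i)ₖ` is `‖φ i‖⁻²` times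
`∫ φ i • u dμ`, the integral of a `Y`-valued function because `φ i ≥ 0`; a closed convex cone
contains such integrals. Then `p x = ∑ i, φ i x • c i` is a nonnegative combination of the `c i`.
-/

open MeasureTheory

def IsOrderCone {E : Type*} [AddCommGroup E] [Module ℝ E] [TopologicalSpace E]
    (C : Set E) : Prop :=
  C.Nonempty ∧ IsClosed C ∧ Convex ℝ C ∧
    (∀ t : ℝ, 0 ≤ t → ∀ x ∈ C, t • x ∈ C) ∧ C ∩ (-C) = {0}

namespace IsOrderCone

section

variable {E : Type*} [AddCommGroup E] [Module ℝ E] [TopologicalSpace E] {C : Set E}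

theorem smul_mem (hC : IsOrderCone C) {t : ℝ} (ht : 0 ≤ t) {x : E} (hx : x ∈ C) : t • x ∈ C :=
  hC.2.2.2.1 t ht x hx

theorem zero_mem (hC : IsOrderCone C) : (0 : E) ∈ C := by
  obtain ⟨x, hx⟩ := hC.1
  simpa using hC.smul_mem le_rfl hx

theorem add_mem (hC : IsOrderCone C) {x y : E} (hx : x ∈ C) (hy : y ∈ C) : x + y ∈ C := by
  have hmid : (1 / 2 : ℝ) • x + (1 / 2 : ℝ) • y ∈ C :=
    hC.2.2.1 hx hy (by norm_num) (by norm_num) (by norm_num)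
  convert hC.smul_mem zero_le_two hmid using 1
  rw [smul_add, smul_smul, smul_smul]
  norm_num

theorem sum_smul_mem (hC : IsOrderCone C) {ι : Type*} (s : Finset ι) {t : ι → ℝ} {x : ι → E}
    (ht : ∀ i ∈ s, 0 ≤ t i) (hx : ∀ i ∈ s, x i ∈ C) : ∑ i ∈ s, t i • x i ∈ C :=
  Finset.sum_induction _ (· ∈ C) (fun _ _ => hC.add_mem) hC.zero_mem
    fun i hi => hC.smul_mem (ht i hi) (hx i hi)

end

theorem integral_mem {Ω : Type*} [MeasurableSpace Ω] {μ : Measure Ω} [IsFiniteMeasure μ]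
    {E : Type*} [NormedAddCommGroup E] [NormedSpace ℝ E] [CompleteSpace E] {C : Set E}
    (hC : IsOrderCone C) {f : Ω → E} (hf : Integrable f μ) (hfC : ∀ᵐ x ∂μ, f x ∈ C) :
    ∫ x, f x ∂μ ∈ C := by
  rcases eq_zero_or_neZero μ with rfl | _
  · simpa using hC.zero_mem
  rw [← measure_smul_average]
  exact hC.smul_mem measureReal_nonneg (hC.2.2.1.average_mem hC.2.1 hfC hf)

end IsOrderCone

open scoped InnerProductSpace

theorem eq_sum_inner_div_smul_of_mem_span {𝕜 E : Type*} [RCLike 𝕜] [NormedAddCommGroup E]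
    [InnerProductSpace 𝕜 E] {ι : Type*} [Fintype ι] {φ : ι → E}
    (hφ : Pairwise fun i j => ⟪φ i, φ j⟫_𝕜 = 0) {p : E}
    (hp : p ∈ Submodule.span 𝕜 (Set.range φ)) :
    p = ∑ i, (⟪φ i, p⟫_𝕜 / (‖φ i‖ : 𝕜) ^ 2) • φ i := by
  obtain ⟨a, rfl⟩ := (Submodule.mem_span_range_iff_exists_fun 𝕜).mp hp
  have hcoeff : ∀ i, ⟪φ i, ∑ j, a j • φ j⟫_𝕜 = a i * (‖φ i‖ : 𝕜) ^ 2 := fun i => by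
    rw [inner_sum, Finset.sum_eq_single i
      (fun j _ hji => by rw [inner_smul_right, hφ hji.symm, mul_zero]) (by simp),
      inner_smul_right, inner_self_eq_norm_sq_to_K]
  refine Finset.sum_congr rfl fun i _ => ?_
  rw [hcoeff]
  -- for `φ i = 0` both sides vanish, the coefficient being the junk value `0 / 0 = 0`
  rcases eq_or_ne (φ i) 0 with h | h
  · simp [h]
  · rw [mul_div_cancel_right₀ _ (by simpa using h)]

theorem L2.real_inner_eq_integral_mul {Ω : Type*} [MeasurableSpace Ω] {μ : Measure Ω}
    (f g : Lp ℝ 2 μ) : ⟪f, g⟫_ℝ = ∫ x, f x * g x ∂μ := by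
  simp [L2.inner_def, mul_comm]

theorem Lp.coeFn_sum_smul {α 𝕜 E : Type*} [MeasurableSpace α] {μ : Measure α} {q : ENNReal}
    [NormedField 𝕜] [NormedAddCommGroup E] [NormedSpace 𝕜 E] {ι : Type*} (s : Finset ι)
    (c : ι → 𝕜) (f : ι → Lp E q μ) :
    ⇑(∑ i ∈ s, c i • f i) =ᵐ[μ] fun x => ∑ i ∈ s, c i • f i x := by
  filter_upwards [Lp.coeFn_finsetSum s fun i => c i • f i,
    (Filter.eventually_all_finset s).2 fun i _ => Lp.coeFn_smul (c i) (f i)] with x hsum hsmul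
  rw [hsum, Finset.sum_apply]
  exact Finset.sum_congr rfl hsmul

theorem IsOrderCone.inner_mem {Ω : Type*} [MeasurableSpace Ω] {μ : Measure Ω}
    [IsFiniteMeasure μ] {ι : Type*} [Fintype ι] {Y : Set (ι → ℝ)} (hY : IsOrderCone Y)
    {v : Lp ℝ 2 μ} (hv : ∀ᵐ x ∂μ, 0 ≤ v x) {u : ι → Lp ℝ 2 μ}
    (hu : ∀ᵐ x ∂μ, (fun k => u k x) ∈ Y) : (fun k => ⟪v, u k⟫_ℝ) ∈ Y := by
  have hint : ∀ k, Integrable (fun x => v x * u k x) μ := fun k => by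
    simpa [mul_comm] using L2.integrable_inner (𝕜 := ℝ) v (u k)
  convert hY.integral_mem (f := fun x => v x • fun k => u k x) (Integrable.of_eval hint)
    (by filter_upwards [hv, hu] with x hvx hux using hY.smul_mem hvx hux) using 1
  funext k
  rw [eval_integral (f := fun x => v x • fun k => u k x) hint, L2.real_inner_eq_integral_mul]
  rfl

theorem stmt18_general {d m : ℕ} {Ω : Type*} [MeasurableSpace Ω]
    (μ : Measure Ω) [IsFiniteMeasure μ]
    (Y : Set (Fin d → ℝ)) (hY : IsOrderCone Y)
    (φ : Fin m → Lp ℝ 2 μ)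
    (hφorth : ∀ i j, i ≠ j → ∫ x, φ i x * φ j x ∂μ = 0)
    (hφpos : ∀ i, ∀ᵐ x ∂μ, 0 ≤ φ i x)
    (u p : Fin d → Lp ℝ 2 μ)
    (hrange : ∀ k, p k ∈ Submodule.span ℝ (Set.range φ))
    (horth : ∀ (k : Fin d) (i : Fin m), ∫ x, (p k x - u k x) * φ i x ∂μ = 0)
    (hu : ∀ᵐ x ∂μ, (fun k => u k x) ∈ Y) :
    ∀ᵐ x ∂μ, (fun k => p k x) ∈ Y := by
  have hφorth_inner : Pairwise fun i j => ⟪φ i, φ j⟫_ℝ = 0 := fun i j hij =>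
    (L2.real_inner_eq_integral_mul _ _).trans (hφorth i j hij)
  have hpu : ∀ k i, ⟪φ i, p k⟫_ℝ = ⟪φ i, u k⟫_ℝ := fun k i => by
    rw [← sub_eq_zero, ← inner_sub_right, L2.real_inner_eq_integral_mul, ← horth k i]
    refine integral_congr_ae ?_
    filter_upwards [Lp.coeFn_sub (p k) (u k)] with x hx
    rw [hx, Pi.sub_apply, mul_comm]
  set c : Fin m → Fin d → ℝ := fun i => (‖φ i‖ ^ 2)⁻¹ • fun k => ⟪φ i, u k⟫_ℝ
  have hcY : ∀ i, c i ∈ Y := fun i =>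
    hY.smul_mem (by positivity) (hY.inner_mem (hφpos i) hu)
  have hpc : ∀ k, p k = ∑ i, c i k • φ i := fun k => by
    rw [eq_sum_inner_div_smul_of_mem_span hφorth_inner (hrange k)]
    simp [hpu, c, div_eq_inv_mul]
  filter_upwards [ae_all_iff.2 fun k => hpc k ▸ Lp.coeFn_sum_smul Finset.univ (c · k) φ,
    ae_all_iff.2 hφpos] with x hpx hφx
  convert hY.sum_smul_mem Finset.univ (fun i _ => hφx i) (fun i _ => hcY i) using 1
  funext k
  simp [hpx k, mul_comm]

/-- For a pairwise orthogonal family of nonzero, nonnegative functions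
`φ₁, …, φₘ ∈ L²(Ω)`, the Bubnov–Galerkin projection determined by the orthogonality
conditions `(πₙ u - u, φᵢ) = 0` (acting componentwise) is `L²(Ω)^d₊`-positive:
if `p` is the projection of `u` (i.e. `p` has components in `span{φ₁,…,φₘ}` and
satisfies the orthogonality conditions) and `u ∈ L²(Ω)^d₊`, then `p ∈ L²(Ω)^d₊`. -/
theorem stmt18 {d m : ℕ} {Ω : Type*} [MeasurableSpace Ω]
    (μ : Measure Ω) [IsFiniteMeasure μ] (hμ : 0 < μ Set.univ)
    (Y : Set (Fin d → ℝ)) (hY : IsOrderCone Y)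
    (φ : Fin m → Lp ℝ 2 μ) (hφne : ∀ i, φ i ≠ 0)
    (hφorth : ∀ i j, i ≠ j → ∫ x, φ i x * φ j x ∂μ = 0)
    (hφpos : ∀ i, ∀ᵐ x ∂μ, 0 ≤ φ i x)
    (u p : Fin d → Lp ℝ 2 μ)
    (hrange : ∀ k, p k ∈ Submodule.span ℝ (Set.range φ))
    (horth : ∀ (k : Fin d) (i : Fin m), ∫ x, (p k x - u k x) * φ i x ∂μ = 0)
    (hu : ∀ᵐ x ∂μ, (fun k => u k x) ∈ Y) :
    ∀ᵐ x ∂μ, (fun k => p k x) ∈ Y :=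
  stmt18_general μ Y hY φ hφorth hφpos u p hrange horth hu
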